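/- arXiv:2411.12856 — 5 statements merged into one kernel-verified Lean document; each statement's English description precedes it below -/
import Mathlib

section
/- For all integers p ≥ 4, d ≥ 2 and n ≥ 2, the inequality p·n·(C(d+n, n) − n − 1) < (d^{p−1} − d^{⌊p/2⌋})·(d^{p−1} − 1)^{n−1} holds, where C(d+n, n) is the binomial coefficient. -/
lemma two_mul_choose_two (m : ℕ) : 2 * Nat.choose (m+2) 2 = (m+2) * (m+1) := by
  induction m with
  | zero => decide
  | succ k ih =>
    have h : Nat.choose (k+3) 2 = Nat.choose (k+2) 1 + Nat.choose (k+2) 2 :=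
      Nat.choose_succ_succ (k+2) 1
    rw [h, Nat.choose_one_right, Nat.mul_add, ih]
    ring

lemma choose_lower (d n : ℕ) (hd : 2 ≤ d) (hn : 2 ≤ n) :
    (n+2) * (n+1) ≤ 2 * Nat.choose (d+n) n := by
  have h1 : Nat.choose (n+2) n ≤ Nat.choose (d+n) n :=
    Nat.choose_le_choose n (by omega)
  have h2 : Nat.choose (n+2) n = Nat.choose (n+2) 2 := by
    have := Nat.choose_symm (n := n+2) (k := 2) (by omega)
    simpa [show n + 2 - 2 = n from by omega] using this
  have h3 := two_mul_choose_two n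
  omega

lemma cube_lb (d : ℕ) (hd : 2 ≤ d) : 4 * d ≤ d^3 := by
  have h1 : 2*2*d ≤ d*d*d := Nat.mul_le_mul (Nat.mul_le_mul hd hd) (le_refl d)
  have h2 : d^3 = d*d*d := by ring
  linarith

set_option maxHeartbeats 1000000 in
lemma step_lemma (d n : ℕ) (hd : 2 ≤ d) (hn : 2 ≤ n) :
    (n+1) * (Nat.choose (d+n+1) (n+1) - (n+1) - 1) ≤
      (d^3 - 1) * (n * (Nat.choose (d+n) n - n - 1)) := by
  set A := Nat.choose (d+n) n with hA'
  set B := Nat.choose (d+n+1) (n+1) with hB'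
  have hAB : (d+n+1) * A = B * (n+1) := by
    simpa using Nat.add_one_mul_choose_eq (d+n) n
  have h2A : (n+2)*(n+1) ≤ 2*A := choose_lower d n hd hn
  have hAge : n+2 ≤ A := by nlinarith
  have hBge : n+3 ≤ B := by nlinarith
  obtain ⟨a, ha⟩ : ∃ a, A = a + (n+1) := ⟨A - (n+1), by omega⟩
  obtain ⟨b, hb⟩ : ∃ b, B = b + (n+2) := ⟨B - (n+2), by omega⟩
  have hd3 : d + 3 ≤ d^3 := by have := cube_lb d hd; omega
  obtain ⟨c, hc, hcge⟩ : ∃ c, d^3 = c+1 ∧ d + 2 ≤ c := ⟨d^3 - 1, by omega, by omega⟩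
  have e1 : B - (n+1) - 1 = b := by omega
  have e2 : A - n - 1 = a := by omega
  have e3 : d^3 - 1 = c := by omega
  rw [e1, e2, e3]
  have h2a : n*(n+1) ≤ 2*a := by nlinarith
  have hage : n+1 ≤ a := by nlinarith
  have heq : (d+n+1) * (a+(n+1)) = (b+(n+2)) * (n+1) := by rw [← ha, ← hb]; exact hAB
  zify at heq hage hcge hn hd ⊢
  have hcn : 2*(d:ℤ) + (n:ℤ) ≤ (c:ℤ)*(n:ℤ) := by
    nlinarith [mul_le_mul_of_nonneg_right hcge (by linarith : (0:ℤ) ≤ (n:ℤ)),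
      mul_le_mul_of_nonneg_left hn (by linarith : (0:ℤ) ≤ (d:ℤ))]
  have P1 : (2*(d:ℤ) + (n:ℤ))*(a:ℤ) ≤ (c:ℤ)*(n:ℤ)*(a:ℤ) :=
    mul_le_mul_of_nonneg_right hcn (by positivity)
  have P2 : (0:ℤ) ≤ ((d:ℤ) - 1) * ((a:ℤ) - ((n:ℤ)+1)) :=
    mul_nonneg (by linarith) (by linarith)
  nlinarith [heq, P1, P2]

lemma key4 (d n : ℕ) (hd : 2 ≤ d) (hn : 2 ≤ n) :
    4 * n * (Nat.choose (d+n) n - n - 1) < (d^3 - d^2) * (d^3 - 1) ^ (n-1) := by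
  induction n, hn using Nat.le_induction with
  | base =>
    have h2 := two_mul_choose_two d
    have e : Nat.choose (d+2) 2 = Nat.choose (2+d) 2 := by rw [Nat.add_comm]
    obtain ⟨e2, he2⟩ : ∃ e2, d = e2 + 2 := ⟨d - 2, by omega⟩
    subst he2
    have hX : 2 * Nat.choose (e2+2+2) 2 = (e2+4) * (e2+3) := by
      have := two_mul_choose_two (e2+2)
      convert this using 2
    have hc3 : (e2+2)^3 = e2^3 + 6*e2^2 + 12*e2 + 8 := by ring
    have hc2 : (e2+2)^2 = e2^2 + 4*e2 + 4 := by ring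
    have h1 : (e2+2)^3 - (e2+2)^2 = e2^3 + 5*e2^2 + 8*e2 + 4 := by omega
    have h2' : (e2+2)^3 - 1 = e2^3 + 6*e2^2 + 12*e2 + 7 := by omega
    rw [h1, h2']
    have hX2 : (e2+4) * (e2+3) = e2^2 + 7*e2 + 12 := by ring
    have : 4 * 2 * (Nat.choose (e2+2+2) 2 - 2 - 1) = 4 * (e2^2 + 7*e2 + 6) := by omega
    rw [pow_one, this]
    have hge4 : 4 ≤ e2^3 + 5*e2^2 + 8*e2 + 4 := by omega
    have hmul : 4 * (e2^3 + 6*e2^2 + 12*e2 + 7)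
        ≤ (e2^3 + 5*e2^2 + 8*e2 + 4) * (e2^3 + 6*e2^2 + 12*e2 + 7) :=
      Nat.mul_le_mul_right _ hge4
    omega
  | succ n hn2 ih =>
    have hs := step_lemma d n hd hn2
    have hd3 : d + 3 ≤ d^3 := by have := cube_lb d hd; omega
    calc 4 * (n+1) * (Nat.choose (d+(n+1)) (n+1) - (n+1) - 1)
        = 4 * ((n+1) * (Nat.choose (d+n+1) (n+1) - (n+1) - 1)) := by
          rw [show d+(n+1) = d+n+1 from by omega]; ring
      _ ≤ 4 * ((d^3 - 1) * (n * (Nat.choose (d+n) n - n - 1))) := by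
          exact Nat.mul_le_mul_left 4 hs
      _ = (d^3 - 1) * (4 * n * (Nat.choose (d+n) n - n - 1)) := by ring
      _ < (d^3 - 1) * ((d^3 - d^2) * (d^3 - 1)^(n-1)) :=
          mul_lt_mul_of_pos_left ih (by omega)
      _ = (d^3 - d^2) * (d^3 - 1)^(n+1-1) := by
          rw [show n+1-1 = (n-1)+1 from by omega, pow_succ]
          ring

theorem stmt4 (p d n : ℕ) (hp : 4 ≤ p) (hd : 2 ≤ d) (hn : 2 ≤ n) :
    p * n * (Nat.choose (d + n) n - n - 1) <
      (d ^ (p - 1) - d ^ (p / 2)) * (d ^ (p - 1) - 1) ^ (n - 1) := by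
  induction p, hp using Nat.le_induction with
  | base => simpa using key4 d n hd hn
  | succ p hp2 ih =>
    have h1 : (p+1) * n * (Nat.choose (d + n) n - n - 1)
        ≤ 2 * (p * n * (Nat.choose (d + n) n - n - 1)) := by
      have : p + 1 ≤ 2 * p := by omega
      calc (p+1) * n * (Nat.choose (d + n) n - n - 1)
          ≤ 2 * p * n * (Nat.choose (d + n) n - n - 1) :=
            Nat.mul_le_mul_right _ (Nat.mul_le_mul_right _ this)
        _ = 2 * (p * n * (Nat.choose (d + n) n - n - 1)) := by ring
    have h2 : 2 * ((d ^ (p - 1) - d ^ (p / 2)) * (d ^ (p - 1) - 1) ^ (n - 1))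
        ≤ (d ^ (p+1 - 1) - d ^ ((p+1) / 2)) * (d ^ (p+1 - 1) - 1) ^ (n - 1) := by
      have hdl : d * (d ^ (p - 1) - d ^ (p / 2)) ≤ d ^ p - d ^ ((p+1)/2) := by
        rw [Nat.mul_sub]
        have e1 : d * d ^ (p-1) = d ^ p := by
          rw [← pow_succ']
          congr 1
          omega
        have e2 : d ^ ((p+1)/2) ≤ d * d ^ (p/2) := by
          rw [← pow_succ']
          exact Nat.pow_le_pow_right (by omega) (by omega)
        rw [e1]
        omega
      have hdr : (d ^ (p - 1) - 1) ^ (n-1) ≤ (d ^ p - 1) ^ (n-1) := by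
        apply Nat.pow_le_pow_left
        have : d ^ (p-1) ≤ d ^ p := Nat.pow_le_pow_right (by omega) (by omega)
        omega
      calc 2 * ((d ^ (p - 1) - d ^ (p / 2)) * (d ^ (p - 1) - 1) ^ (n - 1))
          ≤ d * ((d ^ (p - 1) - d ^ (p / 2)) * (d ^ (p - 1) - 1) ^ (n - 1)) :=
            Nat.mul_le_mul_right _ hd
        _ = (d * (d ^ (p - 1) - d ^ (p / 2))) * (d ^ (p - 1) - 1) ^ (n - 1) := by ring
        _ ≤ (d ^ p - d ^ ((p+1)/2)) * (d ^ p - 1) ^ (n-1) :=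
            Nat.mul_le_mul hdl hdr
        _ = (d ^ (p+1-1) - d ^ ((p+1)/2)) * (d ^ (p+1-1) - 1) ^ (n-1) := by
            norm_num
    calc (p+1) * n * (Nat.choose (d + n) n - n - 1)
        ≤ 2 * (p * n * (Nat.choose (d + n) n - n - 1)) := h1
      _ < 2 * ((d ^ (p - 1) - d ^ (p / 2)) * (d ^ (p - 1) - 1) ^ (n - 1)) :=
          mul_lt_mul_of_pos_left ih (by omega)
      _ ≤ _ := h2
end

section
/- For all integers p ≥ 4, n ≥ 1 and d ≥ 2, the inequality p·(n+1)·(C(d+n, n) − n − 1) ≤ (d^p − d^{⌊p/2⌋})·(d^p − 1)^{n−1} holds. -/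
/-!
Bound the right-hand side from below using `d ^ (p / 2) ≤ d ^ (p - 2)` and `d ^ (p - 1) ≤ d ^ p - 1`,
which leaves `(d ^ 2 - 1) · d ^ (p - 2) · d ^ ((p - 1)(n - 1))`. For `n = 1` the left-hand side is
exactly `2p (d - 1)`, and `2p ≤ (d + 1) d ^ (p - 2)` closes the gap. For `n ≥ 2` the estimate
`C(d + n, n) ≤ (d + 1) d ^ (n - 1)` reduces everything to `p (n + 1) ≤ d ^ ((p - 2) n)`, where the
exponential growth in both `p` and `n` wins.
-/

lemma le_two_pow_sub_two {p : ℕ} (hp : 4 ≤ p) : p ≤ 2 ^ (p - 2) := by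
  induction p, hp using Nat.le_induction with
  | base => norm_num
  | succ p hp ih =>
    rw [show p + 1 - 2 = p - 2 + 1 by omega, pow_succ]
    omega

lemma two_mul_le_add_one_mul_pow {p d : ℕ} (hp : 4 ≤ p) (hd : 2 ≤ d) :
    2 * p ≤ (d + 1) * d ^ (p - 2) :=
  calc 2 * p ≤ 2 * 2 ^ (p - 2) := Nat.mul_le_mul_left 2 (le_two_pow_sub_two hp)
    _ ≤ (d + 1) * d ^ (p - 2) := Nat.mul_le_mul (by omega) (Nat.pow_le_pow_left hd _)

lemma mul_add_one_le_pow {p n d : ℕ} (hp : 4 ≤ p) (hn : 2 ≤ n) (hd : 2 ≤ d) :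
    p * (n + 1) ≤ d ^ ((p - 2) * n) :=
  calc p * (n + 1) ≤ 2 ^ (p - 2) * 2 ^ n :=
        Nat.mul_le_mul (le_two_pow_sub_two hp) Nat.lt_two_pow_self
    _ = 2 ^ (p - 2 + n) := (pow_add _ _ _).symm
    _ ≤ 2 ^ ((p - 2) * n) := Nat.pow_le_pow_right two_pos (by
        have : 2 ≤ p - 2 := by omega
        nlinarith)
    _ ≤ d ^ ((p - 2) * n) := Nat.pow_le_pow_left hd _

lemma choose_add_le_add_one_mul_pow {d n : ℕ} (hd : 2 ≤ d) (hn : 1 ≤ n) :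
    (d + n).choose n ≤ (d + 1) * d ^ (n - 1) := by
  induction n, hn using Nat.le_induction with
  | base => simp
  | succ n hn ih =>
    -- each step multiplies by `(d + n + 1) / (n + 1) ≤ d`
    have hstep : (d + (n + 1)).choose (n + 1) * (n + 1) = (d + n + 1) * (d + n).choose n :=
      (Nat.add_one_mul_choose_eq (d + n) n).symm
    have hfactor : d + n + 1 ≤ (n + 1) * d := by nlinarith
    refine Nat.le_of_mul_le_mul_right ?_ n.succ_pos
    calc (d + (n + 1)).choose (n + 1) * (n + 1) = (d + n + 1) * (d + n).choose n := hstep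
      _ ≤ (n + 1) * d * ((d + 1) * d ^ (n - 1)) := Nat.mul_le_mul hfactor ih
      _ = (d + 1) * d ^ (n + 1 - 1) * (n + 1) := by
        rw [show n + 1 - 1 = n - 1 + 1 by omega, pow_succ]; ring

lemma pow_sub_two_mul_le_pow_sub_pow_div_two {p : ℕ} (d : ℕ) (hp : 3 ≤ p) :
    d ^ (p - 2) * (d ^ 2 - 1) ≤ d ^ p - d ^ (p / 2) := by
  rcases d.eq_zero_or_pos with rfl | hd
  · simp
  rw [Nat.mul_sub_one, ← pow_add, Nat.sub_add_cancel (by omega : 2 ≤ p)]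
  exact Nat.sub_le_sub_left (Nat.pow_le_pow_right hd (by omega)) _

lemma pow_sub_one_le_pow_sub_one {d p : ℕ} (hd : 2 ≤ d) (hp : 1 ≤ p) : d ^ (p - 1) ≤ d ^ p - 1 := by
  have hpow : d ^ p = d * d ^ (p - 1) := by rw [← pow_succ']; congr 1; omega
  have hpos : 1 ≤ d ^ (p - 1) := Nat.one_le_pow _ _ (by omega)
  have hmul : 2 * d ^ (p - 1) ≤ d * d ^ (p - 1) := Nat.mul_le_mul_right _ hd
  omega

lemma pow_mul_pow_le_pow_sub_pow_mul_pow {p n d : ℕ} (hp : 3 ≤ p) (hd : 2 ≤ d) :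
    d ^ (p - 2) * (d ^ 2 - 1) * d ^ ((p - 1) * (n - 1)) ≤
      (d ^ p - d ^ (p / 2)) * (d ^ p - 1) ^ (n - 1) := by
  rw [pow_mul]
  exact Nat.mul_le_mul (pow_sub_two_mul_le_pow_sub_pow_div_two d hp)
    (Nat.pow_le_pow_left (pow_sub_one_le_pow_sub_one hd (by omega)) _)

lemma mul_two_mul_sub_one_le_pow_mul {p d : ℕ} (hp : 4 ≤ p) (hd : 2 ≤ d) :
    p * 2 * (d - 1) ≤ d ^ (p - 2) * (d ^ 2 - 1) := by
  rw [show d ^ 2 - 1 = (d + 1) * (d - 1) by simpa using Nat.sq_sub_sq d 1]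
  calc p * 2 * (d - 1) ≤ (d + 1) * d ^ (p - 2) * (d - 1) :=
        Nat.mul_le_mul_right _ (by linarith [two_mul_le_add_one_mul_pow hp hd])
    _ = d ^ (p - 2) * ((d + 1) * (d - 1)) := by ring

lemma mul_mul_choose_sub_le_pow_mul_pow {p n d : ℕ} (hp : 4 ≤ p) (hn : 2 ≤ n) (hd : 2 ≤ d) :
    p * (n + 1) * ((d + n).choose n - n - 1) ≤
      d ^ (p - 2) * (d ^ 2 - 1) * d ^ ((p - 1) * (n - 1)) := by
  obtain ⟨q, rfl⟩ : ∃ q, p = q + 2 := ⟨p - 2, by omega⟩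
  obtain ⟨m, rfl⟩ : ∃ m, n = m + 1 := ⟨n - 1, by omega⟩
  have hchoose := choose_add_le_add_one_mul_pow hd (n := m + 1) (by omega)
  have hpn := mul_add_one_le_pow hp hn hd
  simp only [Nat.add_sub_cancel] at hchoose hpn ⊢
  rw [show d ^ 2 - 1 = (d + 1) * (d - 1) by simpa using Nat.sq_sub_sq d 1]
  calc (q + 2) * (m + 1 + 1) * ((d + (m + 1)).choose (m + 1) - (m + 1) - 1)
      ≤ d ^ (q * (m + 1)) * ((d + 1) * d ^ m) := Nat.mul_le_mul hpn (by omega)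
    _ ≤ d ^ (q * (m + 1)) * ((d + 1) * d ^ m) * (d - 1) := Nat.le_mul_of_pos_right _ (by omega)
    _ = d ^ q * ((d + 1) * (d - 1)) * d ^ ((q + 1) * m) := by ring

theorem stmt5 (p n d : ℕ) (hp : 4 ≤ p) (hn : 1 ≤ n) (hd : 2 ≤ d) :
    p * (n + 1) * (Nat.choose (d + n) n - n - 1) ≤
      (d ^ p - d ^ (p / 2)) * (d ^ p - 1) ^ (n - 1) := by
  refine le_trans ?_ (pow_mul_pow_le_pow_sub_pow_mul_pow (by omega) hd)
  obtain rfl | hn2 : n = 1 ∨ 2 ≤ n := by omega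
  · simpa using mul_two_mul_sub_one_le_pow_mul hp hd
  · exact mul_mul_choose_sub_le_pow_mul_pow hp hn2 hd
end

section
/- Let p ≥ 1, d ≥ 2 be integers, let w ∈ ℂ∖{0} satisfy w^{d^p} = w, and let I = (i_1,…,i_n) be a multi-index with I_k denoting I with its k-th entry replaced by 0. Fix a point w₀ = (w_1,…,w_n) ∈ (ℂ*)^n periodic of period p for F₀(z) = (z_1^d,…,z_n^d). Then the quantity (i_k d^{p−1} − d^p) · Σ_{i=0}^{p−1} (w₀^{I_k})^{d^i} · w_k^{d^i(i_k − d)} can be written as w_k^{−d^{p−1}} · Q(w₀), where Q is a polynomial in (z_1,…,z_n) whose degree in z_j equals i_j·d^{p−1} for j ≠ k, and whose degree in z_k equals (i_k+1)·d^{p−1} − 1 if 0 ≤ i_k ≤ d−2, and d^{p−1} − 1 if i_k = d−1 (assuming the multi-index is admissible, i.e., i_j ≤ d−1 for all j and I ≠ 0). -/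
/-! Multiplying the `i`-th summand by `w_k ^ d ^ (p - 1)` leaves `w_k` with the exponent
`d ^ (p - 1) + d ^ i * (i_k - d)`, which is nonnegative except when `i = p - 1` and `i_k < d - 1`;
there one adds `d ^ p - 1`, harmless since `w_k ^ (d ^ p - 1) = 1`. So `Q` is a sum of `p` monomials
with the common coefficient `i_k d ^ (p - 1) - d ^ p ≠ 0` and pairwise distinct exponents of `z_k`,
and its degree in each variable is the largest exponent of that variable among them. -/

open Finset MvPolynomial

theorem MvPolynomial.degreeOf_sum_monomial {R σ ι : Type*} [CommSemiring R] {s : Finset ι}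
    {E : ι → σ →₀ ℕ} (hE : Set.InjOn E s) {c : R} (hc : c ≠ 0) (j : σ) :
    (∑ i ∈ s, monomial (E i) c).degreeOf j = s.sup fun i => E i j := by
  classical
  refine le_antisymm ?_ (Finset.sup_le fun i hi => le_degreeOf_of_mem_support j ?_)
  · simpa only [degreeOf_monomial_eq _ _ hc] using degreeOf_sum_le j s fun i => monomial (E i) c
  · have hcoeff : coeff (E i) (∑ i ∈ s, monomial (E i) c) = c := by
      rw [coeff_sum, sum_eq_single_of_mem i hi fun i' hi' hne => ?_, coeff_monomial, if_pos rfl]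
      rw [coeff_monomial, if_neg fun h => hne (hE hi' hi h)]
    rwa [mem_support_iff, hcoeff]

theorem Finset.sup_range_succ_of_monotone {α : Type*} [SemilatticeSup α] [OrderBot α] {f : ℕ → α}
    (hf : Monotone f) (m : ℕ) : (range (m + 1)).sup f = f m :=
  le_antisymm (Finset.sup_le fun _ hi => hf (Nat.lt_succ_iff.mp (mem_range.mp hi)))
    (le_sup (self_mem_range_succ m))

/-- For `i ≤ m` and `a < d`, the representative of `d ^ m + d ^ i * (a - d)` modulo
`d ^ (m + 1) - 1` in `[0, d ^ (m + 1) - 1)`. -/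
def periodicExponent (d m a i : ℕ) : ℕ :=
  if i = m ∧ a + 1 < d then (a + 1) * d ^ m - 1 else d ^ m - d ^ i * (d - a)

section periodicExponent

variable {d m a : ℕ}

theorem pow_mul_sub_le_pow (hd : 0 < d) (ha : a < d) {i : ℕ} (hi : i ≤ m)
    (hwrap : ¬(i = m ∧ a + 1 < d)) : d ^ i * (d - a) ≤ d ^ m := by
  rcases hi.lt_or_eq with hi | rfl
  · calc d ^ i * (d - a) ≤ d ^ i * d := Nat.mul_le_mul_left _ (Nat.sub_le d a)
      _ = d ^ (i + 1) := (pow_succ d i).symm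
      _ ≤ d ^ m := Nat.pow_le_pow_right hd hi
  · rw [show d - a = 1 by omega, mul_one]

theorem periodicExponent_cast (hd : 0 < d) (ha : a < d) {i : ℕ} (hi : i ≤ m) :
    (periodicExponent d m a i : ℤ) =
      (d : ℤ) ^ m + (d : ℤ) ^ i * ((a : ℤ) - d) +
        if i = m ∧ a + 1 < d then (d : ℤ) ^ (m + 1) - 1 else 0 := by
  unfold periodicExponent
  split_ifs with hwrap
  · obtain ⟨rfl, -⟩ := hwrap
    have : 1 ≤ (a + 1) * d ^ i := Nat.one_le_iff_ne_zero.mpr (by positivity)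
    push_cast [this]
    ring
  · push_cast [pow_mul_sub_le_pow hd ha hi hwrap, ha.le]
    ring

theorem periodicExponent_injOn (hd : 2 ≤ d) (ha : a < d) :
    Set.InjOn (periodicExponent d m a) (range (m + 1)) := by
  suffices h : ∀ i j, i < j → j ≤ m → periodicExponent d m a i ≠ periodicExponent d m a j by
    intro i hi j hj hij
    simp only [coe_range, Set.mem_Iio] at hi hj
    by_contra hne
    rcases Nat.lt_or_gt_of_ne hne with hlt | hlt
    exacts [h i j hlt (by omega) hij, h j i hlt (by omega) hij.symm]
  intro i j hij hj
  have hi : ¬(i = m ∧ a + 1 < d) := fun h => by omega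
  have hpos : d - a ≤ d ^ i * (d - a) := Nat.le_mul_of_pos_left _ (by positivity)
  have hle := pow_mul_sub_le_pow (by omega) ha (by omega : i ≤ m) hi
  unfold periodicExponent
  rw [if_neg hi]
  split_ifs with hwrap
  · have : d ^ m ≤ (a + 1) * d ^ m := Nat.le_mul_of_pos_left _ (by omega)
    omega
  · have hlt : d ^ i * (d - a) < d ^ j * (d - a) :=
      Nat.mul_lt_mul_of_pos_right (Nat.pow_lt_pow_right hd hij) (by omega)
    have := pow_mul_sub_le_pow (by omega) ha hj hwrap
    omega

theorem sup_periodicExponent (hd : 0 < d) (ha : a < d) :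
    (range (m + 1)).sup (periodicExponent d m a) =
      if a = d - 1 then d ^ m - 1 else (a + 1) * d ^ m - 1 := by
  have hdm : d ^ m ≤ (a + 1) * d ^ m := Nat.le_mul_of_pos_left _ (by omega)
  refine le_antisymm (Finset.sup_le fun i _ => ?_) ?_
  · have hpos : d - a ≤ d ^ i * (d - a) := Nat.le_mul_of_pos_left _ (by positivity)
    unfold periodicExponent
    split_ifs <;> omega
  · split_ifs with hdeg
    · refine le_sup_of_le (b := 0) (by simp) ?_
      rw [periodicExponent, if_neg (by omega), pow_zero, one_mul]
      omega
    · refine le_sup_of_le (self_mem_range_succ m) ?_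
      rw [periodicExponent, if_pos ⟨rfl, by omega⟩]

theorem zpow_eq_inv_pow_mul_pow_periodicExponent {G₀ : Type*} [GroupWithZero G₀] {w : G₀}
    (hw : w ≠ 0) (hper : w ^ d ^ (m + 1) = w) (hd : 0 < d) (ha : a < d) {i : ℕ} (hi : i ≤ m) :
    w ^ ((d : ℤ) ^ i * ((a : ℤ) - d)) = w⁻¹ ^ d ^ m * w ^ periodicExponent d m a i := by
  have hone : w ^ ((d : ℤ) ^ (m + 1) - 1) = 1 := by
    rw [zpow_sub₀ hw, zpow_one, div_eq_one_iff_eq hw]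
    exact_mod_cast hper
  have hshift : w ^ (if i = m ∧ a + 1 < d then (d : ℤ) ^ (m + 1) - 1 else 0) = 1 := by
    split_ifs <;> simp [hone]
  rw [← zpow_natCast w (periodicExponent d m a i), periodicExponent_cast hd ha hi,
    zpow_add₀ hw, zpow_add₀ hw, hshift, mul_one, show w ^ (d : ℤ) ^ m = w ^ d ^ m by
      exact_mod_cast zpow_natCast w (d ^ m), inv_pow, inv_mul_cancel_left₀ (pow_ne_zero _ hw)]

end periodicExponent

noncomputable def qExponent {σ : Type*} [Finite σ] [DecidableEq σ] (I : σ → ℕ) (k : σ)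
    (d m i : ℕ) : σ →₀ ℕ :=
  Finsupp.equivFunOnFinite.symm
    (Function.update (fun j => I j * d ^ i) k (periodicExponent d m (I k) i))

section qExponent

variable {σ : Type*} [Fintype σ] [DecidableEq σ] {I : σ → ℕ} {k : σ} {d m : ℕ}

theorem qExponent_self (i : ℕ) : qExponent I k d m i k = periodicExponent d m (I k) i := by
  simp only [qExponent, Finsupp.equivFunOnFinite_symm_apply_apply, Function.update_self]

theorem qExponent_of_ne {j : σ} (hj : j ≠ k) (i : ℕ) : qExponent I k d m i j = I j * d ^ i := by
  simp only [qExponent, Finsupp.equivFunOnFinite_symm_apply_apply, Function.update_of_ne hj]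

theorem qExponent_injOn (hd : 2 ≤ d) (ha : I k < d) :
    Set.InjOn (qExponent I k d m) (range (m + 1)) := fun i hi j hj h =>
  periodicExponent_injOn hd ha hi hj (by simpa only [qExponent_self] using DFunLike.congr_fun h k)

theorem eval_monomial_qExponent {R : Type*} [CommSemiring R] (w : σ → R) (c : R)
    (i : ℕ) : eval w (monomial (qExponent I k d m i) c) =
      c * ((∏ j ∈ univ.erase k, w j ^ I j) ^ d ^ i * w k ^ periodicExponent d m (I k) i) := by
  rw [eval_monomial, Finsupp.prod_fintype _ _ fun _ => pow_zero _,
    ← mul_prod_erase univ _ (mem_univ k), qExponent_self, ← prod_pow,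
    prod_congr rfl fun j hj => by rw [qExponent_of_ne (ne_of_mem_erase hj), pow_mul]]
  ring

end qExponent

theorem stmt13_general (n d p : ℕ) (hd : 2 ≤ d) (hp : 1 ≤ p) (k : Fin n)
    (I : Fin n → ℕ) (hadm : ∀ j, I j ≤ d - 1) :
    ∃ Q : MvPolynomial (Fin n) ℂ,
      (∀ j, j ≠ k → Q.degreeOf j = I j * d ^ (p - 1)) ∧
      (Q.degreeOf k = if I k = d - 1 then d ^ (p - 1) - 1 else (I k + 1) * d ^ (p - 1) - 1) ∧
      ∀ w : Fin n → ℂ, (∀ j, w j ≠ 0) → (∀ j, (w j) ^ (d ^ p) = w j) →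
        ((I k : ℂ) * (d : ℂ) ^ (p - 1) - (d : ℂ) ^ p) *
          ∑ i ∈ Finset.range p,
            (∏ j ∈ Finset.univ.erase k, (w j) ^ (I j)) ^ (d ^ i) *
            (w k) ^ ((d : ℤ) ^ i * ((I k : ℤ) - (d : ℤ))) =
        ((w k)⁻¹) ^ (d ^ (p - 1)) * MvPolynomial.eval w Q := by
  obtain ⟨m, rfl⟩ : ∃ m, p = m + 1 := ⟨p - 1, by omega⟩
  rw [Nat.add_sub_cancel]
  have ha : I k < d := by have := hadm k; omega
  set c : ℂ := (I k : ℂ) * (d : ℂ) ^ m - (d : ℂ) ^ (m + 1)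
  have hc : c ≠ 0 := by
    have : I k * d ^ m < d ^ (m + 1) := by
      rw [pow_succ']
      exact Nat.mul_lt_mul_of_pos_right ha (by positivity)
    exact sub_ne_zero.mpr (by exact_mod_cast this.ne)
  have hE := qExponent_injOn (m := m) hd ha
  refine ⟨∑ i ∈ range (m + 1), monomial (qExponent I k d m i) c, fun j hj => ?_, ?_,
    fun w hw hper => ?_⟩
  · rw [degreeOf_sum_monomial hE hc]
    simp only [qExponent_of_ne hj]
    exact sup_range_succ_of_monotone
      (fun i i' h => Nat.mul_le_mul_left _ (Nat.pow_le_pow_right (by omega) h)) m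
  · rw [degreeOf_sum_monomial hE hc]
    simpa only [qExponent_self] using sup_periodicExponent (by omega) ha
  · rw [map_sum, mul_sum, mul_sum]
    refine sum_congr rfl fun i hi => ?_
    rw [eval_monomial_qExponent, zpow_eq_inv_pow_mul_pow_periodicExponent (hw k) (hper k)
      (by omega) ha (Nat.lt_succ_iff.mp (mem_range.mp hi))]
    ring

theorem stmt13 (n d p : ℕ) (hd : 2 ≤ d) (hp : 1 ≤ p) (k : Fin n)
    (I : Fin n → ℕ) (hadm : ∀ j, I j ≤ d - 1) (hI0 : I ≠ (fun _ => 0)) :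
    ∃ Q : MvPolynomial (Fin n) ℂ,
      (∀ j, j ≠ k → Q.degreeOf j = I j * d ^ (p - 1)) ∧
      (Q.degreeOf k = if I k = d - 1 then d ^ (p - 1) - 1 else (I k + 1) * d ^ (p - 1) - 1) ∧
      ∀ w : Fin n → ℂ, (∀ j, w j ≠ 0) → (∀ j, (w j) ^ (d ^ p) = w j) →
        ((I k : ℂ) * (d : ℂ) ^ (p - 1) - (d : ℂ) ^ p) *
          ∑ i ∈ Finset.range p,
            (∏ j ∈ Finset.univ.erase k, (w j) ^ (I j)) ^ (d ^ i) *
            (w k) ^ ((d : ℤ) ^ i * ((I k : ℤ) - (d : ℤ))) =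
        ((w k)⁻¹) ^ (d ^ (p - 1)) * MvPolynomial.eval w Q :=
  stmt13_general n d p hd hp k I hadm
end

section
/- Fix integers d ≥ 2, p ≥ 2, n ≥ 1 and k ∈ {1,…,n}. For two distinct admissible multi-indices I ≠ I' (each with all entries ≤ d−1 and not identically zero), the polynomials Q_{k,I} and Q_{k,I'} defined below contain no pair of proportional monomials (i.e., no monomial of Q_{k,I} is a scalar multiple of a monomial of Q_{k,I'}). -/
/-- The exponent multi-index with entry `e` at position `k` and `s * I j` elsewhere. -/
noncomputable def expVec {n : ℕ} (k : Fin n) (I : Fin n → ℕ) (s e : ℕ) : Fin n →₀ ℕ :=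
  Finsupp.equivFunOnFinite.symm fun j => if j = k then e else s * I j

/-- The polynomial `Q_{k,I}` from Lemma 4.2 of the paper. -/
noncomputable def Qpoly (d p : ℕ) {n : ℕ} (k : Fin n) (I : Fin n → ℕ) :
    MvPolynomial (Fin n) ℂ :=
  if I k = d - 1 then
    (-(d : ℂ) ^ (p - 1)) •
      ∑ i ∈ Finset.range p,
        MvPolynomial.monomial (expVec k I (d ^ i) (d ^ (p - 1) - d ^ i)) (1 : ℂ)
  else
    ((I k : ℂ) * (d : ℂ) ^ (p - 1) - (d : ℂ) ^ p) •
      (MvPolynomial.monomial (expVec k I (d ^ (p - 1)) (d ^ (p - 1) * (I k + 1) - 1)) (1 : ℂ) +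
        ∑ i ∈ Finset.range (p - 1),
          MvPolynomial.monomial (expVec k I (d ^ i) (d ^ (p - 1) - d ^ i * (d - I k))) (1 : ℂ))

/-!
Every monomial of `Q_{k,I}` has exponent `expVec k I s e` with `s` a power of `d` and `e`
determined by `s` and `I k`. For a monomial common to `Q_{k,I}` and `Q_{k,I'}`, comparing the
`k`-th exponents leaves two possibilities. Either the scales agree and `I k = I' k`, and then
`s * I = s * I'` off `k` gives `I = I'`. Or the scales differ by a factor at least `d` and one of
`I k`, `I' k` is `0`; as all entries are `< d`, the scaled equality off `k` then forces both `I`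
and `I'` to vanish there, so one of them is zero. When a term of the `I k = d - 1` shape of `Q`
meets the leading term of the other shape, the factor is `d^{p-1}`, and `p ≥ 2` is what makes it
at least `d`.
-/

open MvPolynomial

lemma expVec_inj {n : ℕ} {k : Fin n} {I I' : Fin n → ℕ} {s e s' e' : ℕ} :
    expVec k I s e = expVec k I' s' e' ↔ e = e' ∧ ∀ j ≠ k, s * I j = s' * I' j := by
  simp only [expVec, EmbeddingLike.apply_eq_iff_eq, funext_iff]
  constructor
  · intro h
    exact ⟨by simpa using h k, fun j hj => by simpa [hj] using h j⟩
  · rintro ⟨he, hoff⟩ j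
    by_cases hj : j = k <;> simp [hj, he, hoff]

lemma mem_support_sum_monomial {R σ ι : Type*} [CommSemiring R] {s : Finset ι}
    {f : ι → σ →₀ ℕ} {c : ι → R} {a : σ →₀ ℕ}
    (h : a ∈ (∑ i ∈ s, monomial (f i) (c i)).support) : ∃ i ∈ s, a = f i := by
  classical
  obtain ⟨i, hi, ha⟩ := Finset.mem_biUnion.mp (support_sum h)
  exact ⟨i, hi, Finset.mem_singleton.mp (support_monomial_subset ha)⟩

/-- The pairs `(s, e)` for which `expVec k I s e` can be an exponent of `Q_{k,I}`, where `c = I k`.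
`low` covers both the case `c = d - 1` and the sum over `i < p - 1` of the other case. -/
inductive IsQExponent (d p c : ℕ) : ℕ → ℕ → Prop
  | low (i : ℕ) : d ^ i * (d - c) ≤ d ^ (p - 1) →
      IsQExponent d p c (d ^ i) (d ^ (p - 1) - d ^ i * (d - c))
  | top : c ≠ d - 1 → IsQExponent d p c (d ^ (p - 1)) (d ^ (p - 1) * (c + 1) - 1)

lemma IsQExponent.pos {d p c s e : ℕ} (hd : 0 < d) (h : IsQExponent d p c s e) : 0 < s := by
  cases h <;> positivity

lemma exists_isQExponent_of_mem_support_Qpoly {d p n : ℕ} (hd : 0 < d) {k : Fin n}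
    {I : Fin n → ℕ} {a : Fin n →₀ ℕ} (ha : a ∈ (Qpoly d p k I).support) :
    ∃ s e, IsQExponent d p (I k) s e ∧ a = expVec k I s e := by
  unfold Qpoly at ha
  split_ifs at ha with hk
  · obtain ⟨i, hi, rfl⟩ := mem_support_sum_monomial (support_smul ha)
    have hdk : d - I k = 1 := by omega
    refine ⟨_, _, .low i ?_, ?_⟩ <;> rw [hdk, mul_one]
    exact Nat.pow_le_pow_right hd (by rw [Finset.mem_range] at hi; omega)
  · rcases Finset.mem_union.mp (support_add (support_smul ha)) with ha | ha
    · exact ⟨_, _, .top hk, Finset.mem_singleton.mp (support_monomial_subset ha)⟩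
    · obtain ⟨i, hi, rfl⟩ := mem_support_sum_monomial ha
      refine ⟨_, _, .low i ?_, rfl⟩
      calc d ^ i * (d - I k) ≤ d ^ i * d := Nat.mul_le_mul_left _ (Nat.sub_le _ _)
        _ = d ^ (i + 1) := (pow_succ _ _).symm
        _ ≤ d ^ (p - 1) := Nat.pow_le_pow_right hd (by rw [Finset.mem_range] at hi; omega)

lemma eq_of_pow_mul_eq_pow_mul_of_lt {d i i' m m' : ℕ} (hd : 0 < d) (hm : m ≤ d) (hm' : 0 < m')
    (hi : i < i') (h : d ^ i * m = d ^ i' * m') : m = d := by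
  have : d ^ i * d ≤ d ^ i * m :=
    calc d ^ i * d = d ^ (i + 1) := (pow_succ _ _).symm
      _ ≤ d ^ i' := Nat.pow_le_pow_right hd hi
      _ ≤ d ^ i' * m' := Nat.le_mul_of_pos_right _ hm'
      _ = d ^ i * m := h.symm
  exact le_antisymm hm (Nat.le_of_mul_le_mul_left this (by positivity))

lemma eq_one_and_eq_zero_of_sub_eq_mul_succ_sub_one {A x c : ℕ} (hA : 0 < A) (hx : 0 < x)
    (hxA : x ≤ A) (h : A - x = A * (c + 1) - 1) : x = 1 ∧ c = 0 := by
  rw [mul_add_one] at h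
  have hAc : A * c = 0 := by omega
  exact ⟨by omega, (Nat.mul_eq_zero.mp hAc).resolve_left hA.ne'⟩

lemma IsQExponent.eq_or_scale_gap {d p c c' s s' e e' : ℕ} (hd0 : 0 < d) (hp : 2 ≤ p)
    (hc : c ≤ d - 1) (hc' : c' ≤ d - 1)
    (h : IsQExponent d p c s e) (h' : IsQExponent d p c' s' e') (he : e = e') :
    (s = s' ∧ c = c') ∨ ((d * s ≤ s' ∨ d * s' ≤ s) ∧ (c = 0 ∨ c' = 0)) := by
  have hA : d ≤ d ^ (p - 1) := Nat.le_self_pow (by omega) d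
  cases h with
  | low i hle =>
    cases h' with
    | low i' hle' =>
      have heq : d ^ i * (d - c) = d ^ i' * (d - c') := by omega
      rcases lt_trichotomy i i' with hi | rfl | hi
      · have := eq_of_pow_mul_eq_pow_mul_of_lt hd0 (Nat.sub_le _ _) (by omega) hi heq
        refine .inr ⟨.inl ?_, .inl (by omega)⟩
        rw [← pow_succ']
        exact Nat.pow_le_pow_right hd0 hi
      · have := Nat.eq_of_mul_eq_mul_left (by positivity) heq
        exact .inl ⟨rfl, by omega⟩
      · have := eq_of_pow_mul_eq_pow_mul_of_lt hd0 (Nat.sub_le _ _) (by omega) hi heq.symm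
        refine .inr ⟨.inr ?_, .inr (by omega)⟩
        rw [← pow_succ']
        exact Nat.pow_le_pow_right hd0 hi
    | top _ =>
      obtain ⟨hx, hc'0⟩ := eq_one_and_eq_zero_of_sub_eq_mul_succ_sub_one (by positivity)
        (Nat.mul_pos (by positivity) (by omega)) hle he
      rw [Nat.eq_one_of_mul_eq_one_right hx, mul_one]
      exact .inr ⟨.inl hA, .inr hc'0⟩
  | top _ =>
    cases h' with
    | low i' hle' =>
      obtain ⟨hx, hc0⟩ := eq_one_and_eq_zero_of_sub_eq_mul_succ_sub_one (by positivity)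
        (Nat.mul_pos (by positivity) (by omega)) hle' he.symm
      rw [Nat.eq_one_of_mul_eq_one_right hx, mul_one]
      exact .inr ⟨.inr hA, .inl hc0⟩
    | top _ =>
      have := Nat.eq_of_mul_eq_mul_left (by positivity)
        (Nat.sub_one_cancel (by positivity) (by positivity) he)
      exact .inl ⟨rfl, Nat.succ_injective this⟩

lemma eq_zero_of_mul_eq_mul_of_mul_le {d s s' x y : ℕ} (hd : 0 < d) (hx : x ≤ d - 1)
    (hs : 0 < s) (hss' : d * s ≤ s') (h : s * x = s' * y) : x = 0 ∧ y = 0 := by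
  have hy : y = 0 := by
    by_contra hy
    have : s' ≤ s * x := h ▸ Nat.le_mul_of_pos_right _ (Nat.pos_of_ne_zero hy)
    have : s * x < d * s := by
      calc s * x ≤ s * (d - 1) := Nat.mul_le_mul_left _ hx
        _ < s * d := Nat.mul_lt_mul_of_pos_left (by omega) hs
        _ = d * s := mul_comm _ _
    omega
  subst hy
  exact ⟨(Nat.mul_eq_zero.mp (h.trans (mul_zero _))).resolve_left hs.ne', rfl⟩

lemma eq_of_forall_ne_mul_eq {n s : ℕ} {k : Fin n} {I I' : Fin n → ℕ} (hs : 0 < s)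
    (hoff : ∀ j ≠ k, s * I j = s * I' j) (hk : I k = I' k) : I = I' :=
  funext fun j => if hj : j = k then hj ▸ hk else Nat.eq_of_mul_eq_mul_left hs (hoff j hj)

lemma eq_zero_of_forall_ne {n : ℕ} {k : Fin n} {I : Fin n → ℕ} (hoff : ∀ j ≠ k, I j = 0)
    (hk : I k = 0) : I = fun _ => 0 :=
  funext fun j => if hj : j = k then hj ▸ hk else hoff j hj

theorem stmt14 (d p n : ℕ) (hd : 2 ≤ d) (hp : 2 ≤ p) (k : Fin n)
    (I I' : Fin n → ℕ) (hI : ∀ j, I j ≤ d - 1) (hI' : ∀ j, I' j ≤ d - 1)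
    (hI0 : I ≠ (fun _ => 0)) (hI'0 : I' ≠ (fun _ => 0)) (hne : I ≠ I') :
    Disjoint (Qpoly d p k I).support (Qpoly d p k I').support := by
  rw [Finset.disjoint_left]
  intro a ha ha'
  have hd0 : 0 < d := by omega
  obtain ⟨s, e, hse, rfl⟩ := exists_isQExponent_of_mem_support_Qpoly hd0 ha
  obtain ⟨s', e', hse', heq⟩ := exists_isQExponent_of_mem_support_Qpoly hd0 ha'
  obtain ⟨he, hoff⟩ := expVec_inj.mp heq
  rcases hse.eq_or_scale_gap hd0 hp (hI k) (hI' k) hse' he with ⟨rfl, hk⟩ | ⟨hgap, hk0⟩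
  · exact hne (eq_of_forall_ne_mul_eq (hse.pos hd0) hoff hk)
  have hvanish : ∀ j ≠ k, I j = 0 ∧ I' j = 0 := fun j hj => hgap.elim
    (fun hgap => eq_zero_of_mul_eq_mul_of_mul_le hd0 (hI j) (hse.pos hd0) hgap (hoff j hj))
    (fun hgap => (eq_zero_of_mul_eq_mul_of_mul_le hd0 (hI' j) (hse'.pos hd0) hgap
      (hoff j hj).symm).symm)
  rcases hk0 with hk0 | hk0
  · exact hI0 (eq_zero_of_forall_ne (fun j hj => (hvanish j hj).1) hk0)
  · exact hI'0 (eq_zero_of_forall_ne (fun j hj => (hvanish j hj).2) hk0)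
end

section
/- Let p ≥ 1, k ∈ {1,…,n}, and let (w_0, w_1, …, w_{p−1}) be a cycle of F₀(z) = (z_1^d,…,z_n^d) with all coordinates of w_0 nonzero, so w_{i,k} = w_{0,k}^{d^i} and w_{0,k}^{d^p − 1} = 1. Then for any multi-index I and the perturbation family F_t = F₀ + t·z^I·e_k, the derivative at t = 0 of the analytically-continued k-th coordinate of the i-th point of the cycle equals [w_{0,k}^{d^i} · Σ_{s=0}^{p−1} d^{p−s−1} · w_{0,k}^{−d^{s+i+1}} · (w_0^I)^{d^{s+i}}] / (1 − d^p). -/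
/-!
Let `u_j` be the derivative at `t = 0` of the `k`-th coordinate of the `j`-th point and
`x_j = w_{0,k}^{d^j}`. Only the `k`-th coordinates move, so differentiating the recursion gives
`u_{j+1} = d x_j^{d-1} u_j + (w_0^I)^{d^j}`. Since `x_{j+1} = x_j^d`, the quotients `v_j = u_j / x_j`
satisfy the constant-coefficient recurrence `v_{j+1} = d v_j + (w_0^I)^{d^j} / x_{j+1}`; going once
around the cycle and using `v_{j+p} = v_j` solves for `(1 - d^p) v_i`.
-/

open Finset

theorem affine_recurrence_add {R : Type*} [CommSemiring R] {c : R} {v b : ℕ → R}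
    (h : ∀ j, v (j + 1) = c * v j + b j) (i m : ℕ) :
    v (i + m) = c ^ m * v i + ∑ s ∈ range m, c ^ (m - s - 1) * b (s + i) := by
  induction m with
  | zero => simp
  | succ m ih =>
    rw [← add_assoc, h, ih, sum_range_succ, mul_add, mul_sum, ← mul_assoc, ← pow_succ',
      add_assoc]
    congr 2
    · refine sum_congr rfl fun s hs => ?_
      rw [← mul_assoc, ← pow_succ']
      congr 2
      have := mem_range.mp hs
      omega
    · simp [add_comm]

theorem eq_div_of_periodic_of_affine_recurrence {K : Type*} [Field K] {c : K} {v b : ℕ → K}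
    {p : ℕ} (h : ∀ j, v (j + 1) = c * v j + b j) (hv : Function.Periodic v p)
    (hc : 1 - c ^ p ≠ 0) (i : ℕ) :
    v i = (∑ s ∈ range p, c ^ (p - s - 1) * b (s + i)) / (1 - c ^ p) := by
  rw [eq_div_iff hc]
  have := affine_recurrence_add h i p
  rw [hv i] at this
  linear_combination this

theorem div_affine_recurrence {K : Type*} [Field K] {d : ℕ} (hd : d ≠ 0) {x u q : ℕ → K}
    (hx : ∀ j, x j ≠ 0) (hxs : ∀ j, x (j + 1) = x j ^ d)
    (hu : ∀ j, u (j + 1) = d * x j ^ (d - 1) * u j + q j) (j : ℕ) :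
    u (j + 1) / x (j + 1) = d * (u j / x j) + (x (j + 1))⁻¹ * q j := by
  have := hx j
  rw [hxs, ← pow_sub_one_mul hd, hu]
  field_simp

section PerturbedCycle

variable {n d : ℕ} {k : Fin n} {I : Fin n → ℕ} {w : ℂ → ℕ → Fin n → ℂ}

theorem differentiableAt_perturbed_coord (hfix : ∀ t i j, j ≠ k → w t i j = w 0 i j)
    (hdiff : ∀ i, DifferentiableAt ℂ (fun t => w t i k) 0) (i : ℕ) (m : Fin n) :
    DifferentiableAt ℂ (fun t => w t i m) 0 := by
  by_cases hm : m = k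
  · exact hm ▸ hdiff i
  · rw [show (fun t => w t i m) = fun _ => w 0 i m from funext fun t => hfix t i m hm]
    exact differentiableAt_const _

theorem hasDerivAt_perturbed_succ
    (hrec : ∀ t i j, w t (i + 1) j =
      (w t i j) ^ d + (if j = k then t * ∏ m, (w t i m) ^ (I m) else 0))
    (hfix : ∀ t i j, j ≠ k → w t i j = w 0 i j)
    (hdiff : ∀ i, DifferentiableAt ℂ (fun t => w t i k) 0) (j : ℕ) :
    HasDerivAt (fun t => w t (j + 1) k)
      (d * w 0 j k ^ (d - 1) * deriv (fun t => w t j k) 0 + ∏ m, w 0 j m ^ I m) 0 := by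
  have hprod : DifferentiableAt ℂ (fun t => ∏ m, w t j m ^ I m) 0 :=
    DifferentiableAt.fun_finsetProd fun m _ =>
      (differentiableAt_perturbed_coord hfix hdiff j m).pow _
  have h := ((hdiff j).hasDerivAt.fun_pow d).fun_add ((hasDerivAt_id' 0).fun_mul hprod.hasDerivAt)
  rw [one_mul, zero_mul, add_zero] at h
  have hstep : (fun t => w t (j + 1) k) = fun t => w t j k ^ d + t * ∏ m, w t j m ^ I m :=
    funext fun t => by simp [hrec]
  rwa [hstep]

end PerturbedCycle

theorem stmt15 (n d p : ℕ) (hd : 2 ≤ d) (hp : 1 ≤ p) (k : Fin n)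
    (w₀ : Fin n → ℂ) (hnz : ∀ j, w₀ j ≠ 0) (hper : ∀ j, (w₀ j) ^ (d ^ p) = w₀ j)
    (I : Fin n → ℕ)
    (w : ℂ → ℕ → Fin n → ℂ)
    (hw0 : ∀ i j, w 0 i j = (w₀ j) ^ (d ^ i))
    (hrec : ∀ t i j, w t (i + 1) j =
      (w t i j) ^ d + (if j = k then t * ∏ m, (w t i m) ^ (I m) else 0))
    (hperiodic : ∀ t i, w t (i + p) = w t i)
    (hfix : ∀ t i j, j ≠ k → w t i j = w 0 i j)
    (hdiff : ∀ i, DifferentiableAt ℂ (fun t => w t i k) 0) :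
    ∀ i, deriv (fun t => w t i k) 0 =
      (w₀ k) ^ (d ^ i) *
        (∑ s ∈ Finset.range p, (d : ℂ) ^ (p - s - 1) *
          ((w₀ k) ^ (d ^ (s + i + 1)))⁻¹ * (∏ m, (w₀ m) ^ (I m)) ^ (d ^ (s + i))) /
        (1 - (d : ℂ) ^ p) := by
  intro i
  set u : ℕ → ℂ := fun j => deriv (fun t => w t j k) 0
  set x : ℕ → ℂ := fun j => w₀ k ^ d ^ j
  have hx : ∀ j, x j ≠ 0 := fun j => pow_ne_zero _ (hnz k)
  have hu : ∀ j, u (j + 1) = d * x j ^ (d - 1) * u j + (∏ m, w₀ m ^ I m) ^ d ^ j := by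
    intro j
    refine (hasDerivAt_perturbed_succ hrec hfix hdiff j).deriv.trans ?_
    simp only [u, x, hw0, ← prod_pow, ← pow_mul, mul_comm (d ^ j)]
  have hv_periodic : Function.Periodic (fun j => u j / x j) p := by
    intro j
    simp only [u, x, hperiodic, pow_add, mul_comm (d ^ j), pow_mul, hper]
  have hc : 1 - (d : ℂ) ^ p ≠ 0 := by
    rw [sub_ne_zero, ne_comm]
    exact_mod_cast (Nat.one_lt_pow (by omega) (by omega) : 1 < d ^ p).ne'
  have hv := eq_div_of_periodic_of_affine_recurrence
    (div_affine_recurrence (by omega) hx (fun j => by simp [x, pow_succ, pow_mul]) hu)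
    hv_periodic hc i
  rw [div_eq_iff (hx i)] at hv
  show u i = _
  rw [hv, mul_comm, mul_div_assoc]
  simp only [x, mul_assoc]
end
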